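/- Let q = (q_n)_{n=0}^∞ be a bounded sequence of positive integers, let c^{(n)} = (c^{(n)}_0,…,c^{(n)}_{q_n}) be positive integers with c^{(n)}_0 = c^{(n)}_{q_n} = d_res, let W^{(n)}_m ∈ ℝ^{c^{(n)}_m × c^{(n)}_{m−1}} and b^{(n)}_m ∈ ℝ^{c^{(n)}_m}. If ∑_{k=0}^∞ ∏_{m=1}^{q_k} ‖W^{(k)}_m‖ < +∞ and ∑_{k=0}^∞ ∑_{m=1}^{q_k} (∏_{m'=m+1}^{q_k} ‖W^{(k)}_{m'}‖) ‖b^{(k)}_m‖ < +∞, then the sequence of networks 𝒩_{c,q,n} converges pointwise on [0,1]^{d_res} as n → ∞. -/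

import Mathlib

/-!
Every block maps into the nonnegative orthant, and for `x ≥ 0` the shortcut gives
`|σ(z + x) - x| ≤ |z|` componentwise; since the norm is monotone, a block moves its input by at
most the norm of its last pre-activation `z`. Unrolling the layers bounds this by `Pₖ ‖x‖ + Bₖ`,
where `Pₖ` and `Bₖ` are the summands of the two hypotheses. Hence
`‖yₙ₊₁‖ ≤ (1 + Pₙ₊₁) ‖yₙ‖ + Bₙ₊₁`, the outputs stay bounded by `exp (∑ P) (‖y₀‖ + ∑ B)`, the
increments are summable, and the outputs form a Cauchy sequence.
-/

open Filter Matrix Topology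
open scoped ENNReal

noncomputable section

/-- The ReLU activation applied componentwise. -/
def relu {d : ℕ} (x : Fin d → ℝ) : Fin d → ℝ := fun i => max (x i) 0

/-- Cast a vector along an equality of dimensions. -/
def castVec {a b : ℕ} (h : a = b) (v : Fin a → ℝ) : Fin b → ℝ := fun i => v (Fin.cast h.symm i)

/-- Cast a matrix along equalities of its dimensions. -/
def mcast {a a' b b' : ℕ} (ha : a = a') (hb : b = b') (M : Matrix (Fin a) (Fin b) ℝ) :
    Matrix (Fin a') (Fin b') ℝ :=
  M.submatrix (Fin.cast ha.symm) (Fin.cast hb.symm)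

/-- Outputs of consecutive fully connected ReLU layers:
`hiddenSeq c W b m x = (σ(W m ⬝ · + b m) ∘ ⋯ ∘ σ(W 1 ⬝ · + b 1)) x` (0-based weight indices). -/
def hiddenSeq (c : ℕ → ℕ) (W : ∀ m, Matrix (Fin (c (m+1))) (Fin (c m)) ℝ)
    (b : ∀ m, Fin (c (m+1)) → ℝ) : (m : ℕ) → (Fin (c 0) → ℝ) → Fin (c m) → ℝ
  | 0 => fun x => x
  | m+1 => fun x => relu ((W m).mulVec (hiddenSeq c W b m x) + b m)

/-- A residual block with `q` layers (`q ≥ 1`), shortcut connection added before the last ReLU. -/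
def resBlock (d q : ℕ) (hq : 0 < q) (c : ℕ → ℕ) (hc0 : c 0 = d) (hcq : c q = d)
    (W : ∀ m, Matrix (Fin (c (m+1))) (Fin (c m)) ℝ)
    (b : ∀ m, Fin (c (m+1)) → ℝ) (x : Fin d → ℝ) : Fin d → ℝ :=
  castVec (show c (q-1+1) = d from (congrArg c (Nat.succ_pred_eq_of_pos hq)).trans hcq)
    (relu ((W (q-1)).mulVec (hiddenSeq c W b (q-1) (castVec hc0.symm x))
      + castVec (show c (q-1+1) = d from
          (congrArg c (Nat.succ_pred_eq_of_pos hq)).trans hcq).symm x + b (q-1)))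

/-- The deep network with shortcut connections: composition of residual blocks `0,…,n`. -/
def resNet (d : ℕ) (q : ℕ → ℕ) (hq : ∀ n, 0 < q n) (c : ℕ → ℕ → ℕ)
    (hc0 : ∀ n, c n 0 = d) (hcq : ∀ n, c n (q n) = d)
    (W : ∀ n m, Matrix (Fin (c n (m+1))) (Fin (c n m)) ℝ)
    (b : ∀ n m, Fin (c n (m+1)) → ℝ) :
    ℕ → (Fin d → ℝ) → Fin d → ℝ
  | 0 => resBlock d (q 0) (hq 0) (c 0) (hc0 0) (hcq 0) (W 0) (b 0)
  | n+1 => fun x => resBlock d (q (n+1)) (hq (n+1)) (c (n+1)) (hc0 (n+1)) (hcq (n+1))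
      (W (n+1)) (b (n+1)) (resNet d q hq c hc0 hcq W b n x)

/-- `J` is a 0/1 diagonal (activation) matrix. -/
def IsActivation {a : ℕ} (J : Matrix (Fin a) (Fin a) ℝ) : Prop :=
  (∀ i, J i i = 0 ∨ J i i = 1) ∧ ∀ i j, i ≠ j → J i j = 0

/-- The pre-activation vector `z` has exactly the sign pattern prescribed by the
activation matrix `J`: positive on the support of `J` and `≤ 0` off it. -/
def inPattern {a : ℕ} (J : Matrix (Fin a) (Fin a) ℝ) (z : Fin a → ℝ) : Prop :=
  ∀ i, J i i = 1 ↔ 0 < z i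

/-- `x` lies in the activation domain of a single residual block w.r.t. `J`. -/
def blockDomain (d q : ℕ) (hq : 0 < q) (c : ℕ → ℕ) (hc0 : c 0 = d) (hcq : c q = d)
    (W : ∀ m, Matrix (Fin (c (m+1))) (Fin (c m)) ℝ)
    (b : ∀ m, Fin (c (m+1)) → ℝ)
    (J : ∀ m, Matrix (Fin (c (m+1))) (Fin (c (m+1))) ℝ) (x : Fin d → ℝ) : Prop :=
  (∀ m, m + 1 < q →
    inPattern (J m) ((W m).mulVec (hiddenSeq c W b m (castVec hc0.symm x)) + b m)) ∧
  inPattern (J (q-1)) ((W (q-1)).mulVec (hiddenSeq c W b (q-1) (castVec hc0.symm x))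
    + castVec (show c (q-1+1) = d from
        (congrArg c (Nat.succ_pred_eq_of_pos hq)).trans hcq).symm x + b (q-1))

/-- The input fed to block `k` (output of the previous blocks; the input itself when `k = 0`). -/
def netInput (d : ℕ) (q : ℕ → ℕ) (hq : ∀ n, 0 < q n) (c : ℕ → ℕ → ℕ)
    (hc0 : ∀ n, c n 0 = d) (hcq : ∀ n, c n (q n) = d)
    (W : ∀ n m, Matrix (Fin (c n (m+1))) (Fin (c n m)) ℝ)
    (b : ∀ n m, Fin (c n (m+1)) → ℝ) :
    ℕ → (Fin d → ℝ) → Fin d → ℝ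
  | 0 => fun x => x
  | k+1 => resNet d q hq c hc0 hcq W b k

/-- Activation domain of the multi-residual-block network `𝒩_{c,q,n}` w.r.t. `J`:
`x ∈ [0,1]^d` and at each layer of each block the pre-activation has the pattern of `J`. -/
def InActDomain (d : ℕ) (q : ℕ → ℕ) (hq : ∀ n, 0 < q n) (c : ℕ → ℕ → ℕ)
    (hc0 : ∀ n, c n 0 = d) (hcq : ∀ n, c n (q n) = d)
    (W : ∀ n m, Matrix (Fin (c n (m+1))) (Fin (c n m)) ℝ)
    (b : ∀ n m, Fin (c n (m+1)) → ℝ)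
    (J : ∀ n m, Matrix (Fin (c n (m+1))) (Fin (c n (m+1))) ℝ)
    (n : ℕ) (x : Fin d → ℝ) : Prop :=
  (∀ i, x i ∈ Set.Icc (0:ℝ) 1) ∧
  ∀ k ≤ n, blockDomain d (q k) (hq k) (c k) (hc0 k) (hcq k) (W k) (b k) (J k)
    (netInput d q hq c hc0 hcq W b k x)

/-- `prodSeg f a n = f n * f (n-1) * ⋯ * f a` (the identity when `n < a`). -/
def prodSeg {α : Type*} [Monoid α] (f : ℕ → α) (a n : ℕ) : α :=
  ((List.range' a (n + 1 - a)).reverse.map f).prod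

/-- `innerProdFrom c W J a m = (J (a+m) W (a+m)) ⋯ (J (a+1) W (a+1)) (J a W a)`,
i.e. the product `∏_{m'=a+1}^{a+m} J_{m'} W_{m'}` in the 1-based indexing of the paper. -/
def innerProdFrom (c : ℕ → ℕ) (W : ∀ m, Matrix (Fin (c (m+1))) (Fin (c m)) ℝ)
    (J : ∀ m, Matrix (Fin (c (m+1))) (Fin (c (m+1))) ℝ) (a : ℕ) :
    (m : ℕ) → Matrix (Fin (c (a + m))) (Fin (c a)) ℝ
  | 0 => (1 : Matrix (Fin (c a)) (Fin (c a)) ℝ)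
  | m+1 => (J (a + m) * W (a + m)) * innerProdFrom c W J a m

/-- The matrix `∏_{m=1}^{q} J_m W_m + J_q` of a residual block. -/
def blockMat (d q : ℕ) (hq : 0 < q) (c : ℕ → ℕ) (hc0 : c 0 = d) (hcq : c q = d)
    (W : ∀ m, Matrix (Fin (c (m+1))) (Fin (c m)) ℝ)
    (J : ∀ m, Matrix (Fin (c (m+1))) (Fin (c (m+1))) ℝ) :
    Matrix (Fin d) (Fin d) ℝ :=
  mcast ((congrArg c (Nat.zero_add q)).trans hcq) hc0 (innerProdFrom c W J 0 q)
    + mcast (show c (q-1+1) = d from (congrArg c (Nat.succ_pred_eq_of_pos hq)).trans hcq)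
        (show c (q-1+1) = d from (congrArg c (Nat.succ_pred_eq_of_pos hq)).trans hcq) (J (q-1))

/-- `Aseq n = ∏_{k=0}^{n} (∏_{m=1}^{q_k} J^{(k)}_m W^{(k)}_m + J^{(k)}_{q_k})`. -/
def Aseq (d : ℕ) (q : ℕ → ℕ) (hq : ∀ n, 0 < q n) (c : ℕ → ℕ → ℕ)
    (hc0 : ∀ n, c n 0 = d) (hcq : ∀ n, c n (q n) = d)
    (W : ∀ n m, Matrix (Fin (c n (m+1))) (Fin (c n m)) ℝ)
    (J : ∀ n m, Matrix (Fin (c n (m+1))) (Fin (c n (m+1))) ℝ) (n : ℕ) :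
    Matrix (Fin d) (Fin d) ℝ :=
  prodSeg (fun k => blockMat d (q k) (hq k) (c k) (hc0 k) (hcq k) (W k) (J k)) 0 n

/-- `∑_{m=1}^{q} (∏_{m'=m+1}^{q} J_{m'} W_{m'}) J_m b_m` for one residual block. -/
def blockBias (d q : ℕ) (c : ℕ → ℕ) (hcq : c q = d)
    (W : ∀ m, Matrix (Fin (c (m+1))) (Fin (c m)) ℝ)
    (b : ∀ m, Fin (c (m+1)) → ℝ)
    (J : ∀ m, Matrix (Fin (c (m+1))) (Fin (c (m+1))) ℝ) : Fin d → ℝ :=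
  ∑ m ∈ (Finset.range q).attach,
    (mcast ((congrArg c (Nat.add_sub_cancel' (Finset.mem_range.mp m.2))).trans hcq) rfl
        (innerProdFrom c W J (m.1+1) (q - (m.1+1)))).mulVec ((J m.1).mulVec (b m.1))

/-- `Bseq n = ∑_{k=0}^{n} ∑_{m=1}^{q_k} [∏_{k'=k+1}^{n} (∏_{m'} J W + J)] (∏_{m'>m} J W) J_m b_m`. -/
def Bseq (d : ℕ) (q : ℕ → ℕ) (hq : ∀ n, 0 < q n) (c : ℕ → ℕ → ℕ)
    (hc0 : ∀ n, c n 0 = d) (hcq : ∀ n, c n (q n) = d)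
    (W : ∀ n m, Matrix (Fin (c n (m+1))) (Fin (c n m)) ℝ)
    (b : ∀ n m, Fin (c n (m+1)) → ℝ)
    (J : ∀ n m, Matrix (Fin (c n (m+1))) (Fin (c n (m+1))) ℝ) (n : ℕ) : Fin d → ℝ :=
  ∑ k ∈ Finset.range (n+1),
    (prodSeg (fun k' => blockMat d (q k') (hq k') (c k') (hc0 k') (hcq k') (W k') (J k'))
        (k+1) n).mulVec
      (blockBias d (q k) (c k) (hcq k) (W k) (b k) (J k))

/-- A family of norms on the spaces `ℝ^m` which is monotone in the sense of the paper. -/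
structure NormFamily where
  N : ∀ m : ℕ, (Fin m → ℝ) → ℝ
  eq_zero_iff : ∀ (m : ℕ) (x : Fin m → ℝ), N m x = 0 ↔ x = 0
  add_le : ∀ (m : ℕ) (x y : Fin m → ℝ), N m (x + y) ≤ N m x + N m y
  smul_eq : ∀ (m : ℕ) (r : ℝ) (x : Fin m → ℝ), N m (r • x) = |r| * N m x
  mono : ∀ (m : ℕ) (x y : Fin m → ℝ), (∀ i, |x i| ≤ |y i|) → N m x ≤ N m y

/-- The operator (matrix) norm induced by a family of vector norms. -/
def NormFamily.op (F : NormFamily) {a b : ℕ} (M : Matrix (Fin a) (Fin b) ℝ) : ℝ :=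
  sSup ((fun x => F.N a (M.mulVec x) / F.N b x) '' {x : Fin b → ℝ | x ≠ 0})

/-- 1-D Toeplitz convolution-with-zero-padding matrix of a filter mask `u ∈ ℝ^{2f+1}`:
`(T1 f d u) a b = u (f - b + a)` when `-f ≤ b - a ≤ f` and `0` otherwise. -/
def T1 (f d : ℕ) (u : Fin (2*f+1) → ℝ) : Matrix (Fin d) (Fin d) ℝ :=
  fun a b =>
    if h : -(f:ℤ) ≤ ((b:ℕ):ℤ) - ((a:ℕ):ℤ) ∧ ((b:ℕ):ℤ) - ((a:ℕ):ℤ) ≤ (f:ℤ) then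
      u ⟨((f:ℤ) - ((b:ℕ):ℤ) + ((a:ℕ):ℤ)).toNat, by omega⟩
    else 0

/-- 2-D block Toeplitz convolution matrix of a mask `v ∈ ℝ^{(2f+1)×(2f+1)}`:
the `(a,b)` block is `T1 f d (v (f - b + a))` when `-f ≤ b - a ≤ f` and `0` otherwise. -/
def T2 (f d : ℕ) (v : Fin (2*f+1) → Fin (2*f+1) → ℝ) :
    Matrix (Fin d × Fin d) (Fin d × Fin d) ℝ :=
  fun P Q =>
    if h : -(f:ℤ) ≤ ((Q.1:ℕ):ℤ) - ((P.1:ℕ):ℤ) ∧ ((Q.1:ℕ):ℤ) - ((P.1:ℕ):ℤ) ≤ (f:ℤ) then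
      T1 f d (v ⟨((f:ℤ) - ((Q.1:ℕ):ℤ) + ((P.1:ℕ):ℤ)).toNat, by omega⟩) P.2 Q.2
    else 0

/-- The block matrix `T(w)` of a multi-channel convolution
with `cin` input channels and `cout` output channels: the `(i,j)` block is `T2 f d (w i j)`. -/
def Tmulti (f d cin cout : ℕ)
    (w : Fin cout → Fin cin → Fin (2*f+1) → Fin (2*f+1) → ℝ) :
    Matrix (Fin cout × Fin d × Fin d) (Fin cin × Fin d × Fin d) ℝ :=
  fun P Q => T2 f d (w P.1 Q.1) P.2 Q.2

/-- Multi-channel 2-D convolution with zero padding, as matrix-vector multiplication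
by the Toeplitz-type matrices `T2`. -/
def convLayer (f d cin cout : ℕ)
    (w : Fin cout → Fin cin → Fin (2*f+1) → Fin (2*f+1) → ℝ)
    (x : Fin cin → Fin d → Fin d → ℝ) : Fin cout → Fin d → Fin d → ℝ :=
  fun i a b => ∑ j, ∑ s, ∑ t, T2 f d (w i j) (a, b) (s, t) * x j s t

/-- Cast the channel index of a tensor along an equality of channel numbers. -/
def castChan {d a b : ℕ} (h : a = b) (x : Fin a → Fin d → Fin d → ℝ) :
    Fin b → Fin d → Fin d → ℝ :=
  fun i => x (Fin.cast h.symm i)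

/-- Hidden layers of a convolutional residual block (with constant-per-channel biases `β`). -/
def convHidden (d : ℕ) (c : ℕ → ℕ) (f : ℕ → ℕ)
    (w : ∀ m, Fin (c (m+1)) → Fin (c m) → Fin (2 * f m + 1) → Fin (2 * f m + 1) → ℝ)
    (β : ∀ m, Fin (c (m+1)) → ℝ) :
    (m : ℕ) → (Fin (c 0) → Fin d → Fin d → ℝ) → Fin (c m) → Fin d → Fin d → ℝ
  | 0 => fun x => x
  | m+1 => fun x i a b =>
      max (convLayer (f m) d (c m) (c (m+1)) (w m) (convHidden d c f w β m x) i a b + β m i) 0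

/-- A convolutional residual block with `Q ≥ 1` convolutional layers and a shortcut connection. -/
def convBlock (d Q : ℕ) (hQ : 0 < Q) (cres : ℕ) (c : ℕ → ℕ)
    (hc0 : c 0 = cres) (hcq : c Q = cres) (f : ℕ → ℕ)
    (w : ∀ m, Fin (c (m+1)) → Fin (c m) → Fin (2 * f m + 1) → Fin (2 * f m + 1) → ℝ)
    (β : ∀ m, Fin (c (m+1)) → ℝ)
    (x : Fin cres → Fin d → Fin d → ℝ) : Fin cres → Fin d → Fin d → ℝ :=
  castChan (show c (Q-1+1) = cres from (congrArg c (Nat.succ_pred_eq_of_pos hQ)).trans hcq)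
    (fun i a b =>
      max (convLayer (f (Q-1)) d (c (Q-1)) (c (Q-1+1)) (w (Q-1))
            (convHidden d c f w β (Q-1) (castChan hc0.symm x)) i a b
          + x (Fin.cast (show c (Q-1+1) = cres from
              (congrArg c (Nat.succ_pred_eq_of_pos hQ)).trans hcq) i) a b
          + β (Q-1) i) 0)

/-- The deep convolutional ResNet without the output layer: sampling layer
`σ(x ∗ w_s + b_s)` (block `0`) followed by the convolutional residual blocks `1,…,n`. -/
def convNet (d cin cres : ℕ) (q : ℕ → ℕ) (hq : ∀ n, 0 < q n)
    (c : ℕ → ℕ → ℕ) (hc00 : c 0 0 = cin) (h01 : c 0 1 = cres)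
    (hc0 : ∀ n, 0 < n → c n 0 = cres) (hcq : ∀ n, 0 < n → c n (q n) = cres)
    (f : ℕ → ℕ → ℕ)
    (w : ∀ n m, Fin (c n (m+1)) → Fin (c n m) → Fin (2 * f n m + 1) → Fin (2 * f n m + 1) → ℝ)
    (β : ∀ n m, Fin (c n (m+1)) → ℝ) :
    ℕ → (Fin cin → Fin d → Fin d → ℝ) → Fin cres → Fin d → Fin d → ℝ
  | 0 => fun x => castChan h01 (fun i a b =>
      max (convLayer (f 0 0) d (c 0 0) (c 0 1) (w 0 0) (castChan hc00.symm x) i a b + β 0 0 i) 0)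
  | n+1 => fun x =>
      convBlock d (q (n+1)) (hq (n+1)) cres (c (n+1)) (hc0 (n+1) (Nat.succ_pos n))
        (hcq (n+1) (Nat.succ_pos n)) (f (n+1)) (w (n+1)) (β (n+1))
        (convNet d cin cres q hq c hc00 h01 hc0 hcq f w β n x)

/-- The ℓ_p norm of a vector, `p ∈ [1,∞]`. -/
def lpNorm (p : ℝ≥0∞) {ι : Type*} [Fintype ι] (x : ι → ℝ) : ℝ :=
  if p = ∞ then ⨆ i, |x i| else (∑ i, |x i| ^ p.toReal) ^ (1 / p.toReal)

/-- The matrix (operator) norm induced by the ℓ_p vector norms. -/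
def opNormP (p : ℝ≥0∞) {α β : Type*} [Fintype α] [Fintype β] (M : Matrix α β ℝ) : ℝ :=
  sSup ((fun x => lpNorm p (M.mulVec x) / lpNorm p x) '' {x : β → ℝ | x ≠ 0})

/-- Maximum absolute column sum of a matrix (the operator norm induced by ℓ₁). -/
def maxColSum {α β : Type*} [Fintype α] [Fintype β] (M : Matrix α β ℝ) : ℝ :=
  ⨆ j, ∑ i, |M i j|

/-- Maximum absolute row sum of a matrix (the operator norm induced by ℓ_∞). -/
def maxRowSum {α β : Type*} [Fintype α] [Fintype β] (M : Matrix α β ℝ) : ℝ :=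
  ⨆ i, ∑ j, |M i j|

/-- The block matrix with blocks `A i j ∈ ℝ^{r×c}`, `i < N`, `j < M`. -/
def blockMatrixOf {N M r c : ℕ} (A : Fin N → Fin M → Matrix (Fin r) (Fin c) ℝ) :
    Matrix (Fin N × Fin r) (Fin M × Fin c) ℝ :=
  fun p q => A p.1 q.1 p.2 q.2

/-- The factor `N^{(n)}_m` of Theorem 5.2: the bound of Lemma 5.1 on `‖T(w)‖_p`. -/
def Nfactor (p : ℝ≥0∞) {f cin cout : ℕ}
    (w : Fin cout → Fin cin → Fin (2*f+1) → Fin (2*f+1) → ℝ) : ℝ :=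
  (⨆ j : Fin cin, ∑ i, ∑ i', ∑ j', |w i j i' j'|) ^ ((1/p).toReal)
    * (⨆ i : Fin cout, ∑ j, ∑ i', ∑ j', |w i j i' j'|) ^ (1 - (1/p).toReal)

/-- Zero padding of a vector `x ∈ ℝ^{din}` to a vector `(x, 0) ∈ ℝ^{d}`. -/
def padVec (din d : ℕ) (x : Fin din → ℝ) : Fin d → ℝ :=
  fun i => if h : (i : ℕ) < din then x ⟨i, h⟩ else 0

/-- The matrix `[Ws  0] ∈ ℝ^{d × d}` obtained by padding `Ws ∈ ℝ^{d × din}` with zero columns. -/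
def padMat (din d : ℕ) (Ws : Matrix (Fin d) (Fin din) ℝ) : Matrix (Fin d) (Fin d) ℝ :=
  fun i j => if h : (j : ℕ) < din then Ws i ⟨j, h⟩ else 0

def affineRec (w β : ℕ → ℝ) (v₀ : ℝ) : ℕ → ℝ
  | 0 => v₀
  | m + 1 => w m * affineRec w β v₀ m + β m

theorem affineRec_eq (w β : ℕ → ℝ) (v₀ : ℝ) (m : ℕ) :
    affineRec w β v₀ m = (∏ j ∈ Finset.range m, w j) * v₀ +
      ∑ j ∈ Finset.range m, (∏ j' ∈ Finset.Ico (j + 1) m, w j') * β j := by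
  induction m with
  | zero => simp [affineRec]
  | succ m ih =>
    have hsum : ∑ j ∈ Finset.range m, (∏ j' ∈ Finset.Ico (j + 1) (m + 1), w j') * β j =
        w m * ∑ j ∈ Finset.range m, (∏ j' ∈ Finset.Ico (j + 1) m, w j') * β j := by
      rw [Finset.mul_sum]
      refine Finset.sum_congr rfl fun j hj => ?_
      rw [Finset.prod_Ico_succ_top (Finset.mem_range.mp hj)]
      ring
    rw [affineRec, ih, Finset.prod_range_succ, Finset.sum_range_succ, hsum, Finset.Ico_self,
      Finset.prod_empty]
    ring

theorem le_affineRec {u w β : ℕ → ℝ} (hw : ∀ m, 0 ≤ w m)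
    (h : ∀ m, u (m + 1) ≤ w m * u m + β m) (m : ℕ) : u m ≤ affineRec w β (u 0) m := by
  induction m with
  | zero => exact le_rfl
  | succ m ih => exact (h m).trans (by rw [affineRec]; gcongr; exact hw m)

theorem le_mul_exp_tsum_of_le_one_add_mul_add {a p β : ℕ → ℝ} (ha : 0 ≤ a 0)
    (hp : ∀ n, 0 ≤ p n) (hβ : ∀ n, 0 ≤ β n) (hps : Summable p) (hβs : Summable β)
    (h : ∀ n, a (n + 1) ≤ (1 + p n) * a n + β n) (n : ℕ) :
    a n ≤ Real.exp (∑' k, p k) * (a 0 + ∑' k, β k) := by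
  have hprod : ∀ s : Finset ℕ, ∏ k ∈ s, (1 + p k) ≤ Real.exp (∑' k, p k) := fun s =>
    (Real.prod_one_add_le_exp_sum s hp).trans
      (Real.exp_le_exp.mpr (hps.sum_le_tsum s fun k _ => hp k))
  calc a n ≤ affineRec (fun k => 1 + p k) β (a 0) n :=
        le_affineRec (fun k => by linarith [hp k]) h n
    _ = (∏ k ∈ Finset.range n, (1 + p k)) * a 0 +
          ∑ j ∈ Finset.range n, (∏ k ∈ Finset.Ico (j + 1) n, (1 + p k)) * β j :=
        affineRec_eq _ _ _ _
    _ ≤ Real.exp (∑' k, p k) * a 0 + ∑ j ∈ Finset.range n, Real.exp (∑' k, p k) * β j := by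
        gcongr with j hj
        · exact hprod _
        · exact hβ j
        · exact hprod _
    _ ≤ Real.exp (∑' k, p k) * (a 0 + ∑' k, β k) := by
        rw [← Finset.mul_sum, ← mul_add]
        gcongr
        exact hβs.sum_le_tsum _ fun k _ => hβ k

namespace NormFamily

variable (F : NormFamily)

theorem N_zero (m : ℕ) : F.N m 0 = 0 := (F.eq_zero_iff m 0).mpr rfl

theorem N_neg (m : ℕ) (x : Fin m → ℝ) : F.N m (-x) = F.N m x := by
  simpa using F.smul_eq m (-1) x

theorem N_nonneg (m : ℕ) (x : Fin m → ℝ) : 0 ≤ F.N m x := by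
  have h := F.add_le m x (-x)
  rw [add_neg_cancel, N_zero, N_neg] at h
  linarith

theorem N_sub_comm (m : ℕ) (x y : Fin m → ℝ) : F.N m (x - y) = F.N m (y - x) := by
  rw [← neg_sub, N_neg]

theorem N_le_N_sub_add (m : ℕ) (x y : Fin m → ℝ) : F.N m x ≤ F.N m (x - y) + F.N m y := by
  simpa using F.add_le m (x - y) y

theorem N_castVec {a b : ℕ} (h : a = b) (v : Fin a → ℝ) : F.N b (castVec h v) = F.N a v := by
  subst h
  rfl

theorem abs_apply_mul_N_single_le {m : ℕ} (x : Fin m → ℝ) (i : Fin m) :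
    |x i| * F.N m (Pi.single i 1) ≤ F.N m x := by
  rw [← F.smul_eq]
  refine F.mono m _ _ fun j => ?_
  rcases eq_or_ne j i with rfl | hj
  · simp
  · simp [Pi.single_eq_of_ne hj]

theorem N_pos {m : ℕ} {x : Fin m → ℝ} (hx : x ≠ 0) : 0 < F.N m x :=
  (F.N_nonneg m x).lt_of_ne fun h => hx ((F.eq_zero_iff m x).mp h.symm)

theorem exists_norm_le_mul_N (m : ℕ) :
    ∃ K, 0 ≤ K ∧ ∀ x : Fin m → ℝ, ‖x‖ ≤ K * F.N m x := by
  have hinv : ∀ i : Fin m, 0 ≤ (F.N m (Pi.single i 1))⁻¹ := fun i =>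
    inv_nonneg.mpr (F.N_nonneg m _)
  set K := ∑ i, (F.N m (Pi.single i 1))⁻¹
  have hK : 0 ≤ K := Finset.sum_nonneg fun i _ => hinv i
  refine ⟨K, hK, fun x => (pi_norm_le_iff_of_nonneg (mul_nonneg hK (F.N_nonneg m x))).mpr
    fun i => ?_⟩
  calc ‖x i‖ ≤ (F.N m (Pi.single i 1))⁻¹ * F.N m x := by
        rw [Real.norm_eq_abs, inv_mul_eq_div,
          le_div_iff₀ (F.N_pos (Pi.single_ne_zero_iff.mpr one_ne_zero))]
        exact F.abs_apply_mul_N_single_le x i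
    _ ≤ K * F.N m x := by
        gcongr
        exacts [F.N_nonneg m x, Finset.single_le_sum (fun j _ => hinv j) (Finset.mem_univ i)]

theorem N_le_N_one_mul_norm (m : ℕ) (x : Fin m → ℝ) : F.N m x ≤ F.N m 1 * ‖x‖ := by
  calc F.N m x ≤ F.N m (‖x‖ • 1) := F.mono m _ _ fun i => by
        simpa using norm_le_pi_norm x i
    _ = F.N m 1 * ‖x‖ := by rw [F.smul_eq, abs_norm, mul_comm]

theorem exists_N_mulVec_le {a b : ℕ} (M : Matrix (Fin a) (Fin b) ℝ) :
    ∃ K, ∀ v, F.N a (M *ᵥ v) ≤ K * F.N b v := by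
  obtain ⟨K, -, hK⟩ := F.exists_norm_le_mul_N b
  let T := LinearMap.toContinuousLinearMap (Matrix.toLin' M)
  refine ⟨F.N a 1 * ‖T‖ * K, fun v => ?_⟩
  calc F.N a (M *ᵥ v) ≤ F.N a 1 * ‖T v‖ := F.N_le_N_one_mul_norm a _
    _ ≤ F.N a 1 * (‖T‖ * (K * F.N b v)) := by
        gcongr
        · exact F.N_nonneg a 1
        · exact T.le_opNorm_of_le (hK v)
    _ = F.N a 1 * ‖T‖ * K * F.N b v := by ring

theorem op_nonneg {a b : ℕ} (M : Matrix (Fin a) (Fin b) ℝ) : 0 ≤ F.op M :=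
  Real.sSup_nonneg <| by
    rintro _ ⟨v, -, rfl⟩
    exact div_nonneg (F.N_nonneg _ _) (F.N_nonneg _ _)

theorem N_mulVec_le {a b : ℕ} (M : Matrix (Fin a) (Fin b) ℝ) (v : Fin b → ℝ) :
    F.N a (M *ᵥ v) ≤ F.op M * F.N b v := by
  rcases eq_or_ne v 0 with rfl | hv
  · simp [N_zero]
  obtain ⟨K, hK⟩ := F.exists_N_mulVec_le M
  have hbdd : BddAbove ((fun x => F.N a (M *ᵥ x) / F.N b x) '' {x | x ≠ 0}) := by
    refine ⟨K, ?_⟩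
    rintro _ ⟨x, hx, rfl⟩
    exact (div_le_iff₀ (F.N_pos hx)).mpr (hK x)
  exact (div_le_iff₀ (F.N_pos hv)).mp (le_csSup hbdd ⟨v, hv, rfl⟩)

theorem N_mulVec_add_le {a b : ℕ} (M : Matrix (Fin a) (Fin b) ℝ) (v : Fin b → ℝ)
    (β : Fin a → ℝ) : F.N a (M *ᵥ v + β) ≤ F.op M * F.N b v + F.N a β :=
  (F.add_le a _ _).trans (by gcongr; exact F.N_mulVec_le M v)

theorem N_relu_le (m : ℕ) (x : Fin m → ℝ) : F.N m (relu x) ≤ F.N m x :=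
  F.mono m _ _ fun i => by simpa [relu] using abs_max_sub_max_le_abs (x i) 0 0

theorem N_relu_add_sub_le {m : ℕ} (z : Fin m → ℝ) {x : Fin m → ℝ} (hx : ∀ i, 0 ≤ x i) :
    F.N m (relu (z + x) - x) ≤ F.N m z :=
  F.mono m _ _ fun i => by
    simpa [relu, max_eq_left (hx i)] using abs_max_sub_max_le_abs (z i + x i) (x i) 0

theorem exists_tendsto_of_N_sub_le {m : ℕ} {y : ℕ → Fin m → ℝ} {p β : ℕ → ℝ}
    (hp : ∀ n, 0 ≤ p n) (hβ : ∀ n, 0 ≤ β n) (hps : Summable p) (hβs : Summable β)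
    (h : ∀ n, F.N m (y (n + 1) - y n) ≤ p n * F.N m (y n) + β n) :
    ∃ z, Tendsto y atTop (𝓝 z) := by
  set C := Real.exp (∑' k, p k) * (F.N m (y 0) + ∑' k, β k)
  have hbound : ∀ n, F.N m (y n) ≤ C :=
    le_mul_exp_tsum_of_le_one_add_mul_add (F.N_nonneg m _) hp hβ hps hβs fun n =>
      (F.N_le_N_sub_add m _ (y n)).trans (by linarith [h n])
  have hstep : ∀ n, F.N m (y (n + 1) - y n) ≤ p n * C + β n := fun n =>
    (h n).trans (by gcongr; exacts [hp n, hbound n])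
  obtain ⟨K, hK0, hK⟩ := F.exists_norm_le_mul_N m
  have hdist : Summable fun n => dist (y n) (y (n + 1)) := by
    refine ((hps.mul_right C).add hβs).mul_left K |>.of_nonneg_of_le (fun _ => dist_nonneg)
      fun n => ?_
    rw [dist_eq_norm]
    calc ‖y n - y (n + 1)‖ ≤ K * F.N m (y (n + 1) - y n) := by rw [F.N_sub_comm]; exact hK _
      _ ≤ K * (p n * C + β n) := by gcongr; exact hstep n
  exact cauchySeq_tendsto_of_complete (cauchySeq_of_summable_dist hdist)

end NormFamily

theorem NormFamily.N_hiddenSeq_le (F : NormFamily) (c : ℕ → ℕ)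
    (W : ∀ m, Matrix (Fin (c (m+1))) (Fin (c m)) ℝ) (b : ∀ m, Fin (c (m+1)) → ℝ)
    (x : Fin (c 0) → ℝ) (m : ℕ) :
    F.N (c m) (hiddenSeq c W b m x) ≤
      affineRec (fun j => F.op (W j)) (fun j => F.N (c (j+1)) (b j)) (F.N (c 0) x) m :=
  le_affineRec (u := fun m => F.N (c m) (hiddenSeq c W b m x)) (fun j => F.op_nonneg (W j))
    (fun _ => (F.N_relu_le _ _).trans (F.N_mulVec_add_le _ _ _)) m

section ResBlock

variable {d Q : ℕ} (hQ : 0 < Q) (c : ℕ → ℕ) (hc0 : c 0 = d) (hcQ : c Q = d)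
  (W : ∀ m, Matrix (Fin (c (m+1))) (Fin (c m)) ℝ) (b : ∀ m, Fin (c (m+1)) → ℝ)

theorem resBlock_eq (e : c (Q - 1 + 1) = d) (x : Fin d → ℝ) :
    resBlock d Q hQ c hc0 hcQ W b x =
      relu (castVec e (W (Q-1) *ᵥ hiddenSeq c W b (Q-1) (castVec hc0.symm x) + b (Q-1)) + x) := by
  funext i
  simp only [resBlock, castVec, relu, Pi.add_apply, Fin.cast_cast, Fin.cast_eq_self, add_right_comm]

theorem resBlock_nonneg (x : Fin d → ℝ) (i : Fin d) : 0 ≤ resBlock d Q hQ c hc0 hcQ W b x i :=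
  le_max_right _ _

theorem NormFamily.N_resBlock_sub_le (F : NormFamily) {x : Fin d → ℝ} (hx : ∀ i, 0 ≤ x i) :
    F.N d (resBlock d Q hQ c hc0 hcQ W b x - x) ≤
      (∏ m ∈ Finset.range Q, F.op (W m)) * F.N d x +
        ∑ m ∈ Finset.range Q, (∏ m' ∈ Finset.Ico (m+1) Q, F.op (W m')) * F.N (c (m+1)) (b m) := by
  obtain ⟨Q, rfl⟩ : ∃ Q', Q = Q' + 1 := ⟨Q - 1, (Nat.succ_pred_eq_of_pos hQ).symm⟩
  rw [← affineRec_eq, ← F.N_castVec hc0.symm x, resBlock_eq hQ c hc0 hcQ W b hcQ]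
  calc _ ≤ F.N (c (Q + 1)) (W Q *ᵥ hiddenSeq c W b Q (castVec hc0.symm x) + b Q) := by
        rw [← F.N_castVec hcQ]
        exact F.N_relu_add_sub_le _ hx
    _ ≤ F.op (W Q) * F.N (c Q) (hiddenSeq c W b Q (castVec hc0.symm x)) + F.N (c (Q+1)) (b Q) :=
        F.N_mulVec_add_le _ _ _
    _ ≤ _ := by
        rw [affineRec]
        gcongr
        exacts [F.op_nonneg _, F.N_hiddenSeq_le c W b _ Q]

end ResBlock

section ResNet

variable {d : ℕ} {q : ℕ → ℕ} (hq : ∀ n, 0 < q n) {c : ℕ → ℕ → ℕ}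
  (hc0 : ∀ n, c n 0 = d) (hcq : ∀ n, c n (q n) = d)
  (W : ∀ n m, Matrix (Fin (c n (m+1))) (Fin (c n m)) ℝ) (b : ∀ n m, Fin (c n (m+1)) → ℝ)

theorem resNet_succ (n : ℕ) (x : Fin d → ℝ) :
    resNet d q hq c hc0 hcq W b (n + 1) x =
      resBlock d (q (n+1)) (hq (n+1)) (c (n+1)) (hc0 (n+1)) (hcq (n+1)) (W (n+1)) (b (n+1))
        (resNet d q hq c hc0 hcq W b n x) :=
  rfl

theorem resNet_nonneg (n : ℕ) (x : Fin d → ℝ) (i : Fin d) :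
    0 ≤ resNet d q hq c hc0 hcq W b n x i := by
  cases n with
  | zero => exact resBlock_nonneg (hq 0) _ (hc0 0) (hcq 0) (W 0) (b 0) x i
  | succ n => exact resBlock_nonneg (hq (n+1)) _ (hc0 (n+1)) (hcq (n+1)) (W (n+1)) (b (n+1)) _ i

end ResNet

theorem stmt4_general (F : NormFamily)
    (d : ℕ)
    (q : ℕ → ℕ) (hq : ∀ k, 0 < q k)
    (c : ℕ → ℕ → ℕ)
    (hc0 : ∀ k, c k 0 = d) (hcq : ∀ k, c k (q k) = d)
    (W : ∀ k m, Matrix (Fin (c k (m+1))) (Fin (c k m)) ℝ)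
    (b : ∀ k m, Fin (c k (m+1)) → ℝ)
    (hW : Summable fun k => ∏ m ∈ Finset.range (q k), F.op (W k m))
    (hb : Summable fun k => ∑ m ∈ Finset.range (q k),
      (∏ m' ∈ Finset.Ico (m+1) (q k), F.op (W k m')) * F.N (c k (m+1)) (b k m)) :
    ∀ x : Fin d → ℝ, (∀ i, x i ∈ Set.Icc (0:ℝ) 1) →
      ∃ y, Tendsto (fun n => resNet d q hq c hc0 hcq W b n x) atTop (nhds y) := by
  intro x _
  have hW' := (summable_nat_add_iff 1).mpr hW
  have hb' := (summable_nat_add_iff 1).mpr hb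
  refine F.exists_tendsto_of_N_sub_le
    (fun n => Finset.prod_nonneg fun m _ => F.op_nonneg (W (n + 1) m))
    (fun n => Finset.sum_nonneg fun m _ =>
      mul_nonneg (Finset.prod_nonneg fun m' _ => F.op_nonneg _) (F.N_nonneg _ _))
    hW' hb' fun n => ?_
  rw [resNet_succ]
  exact F.N_resBlock_sub_le _ _ _ _ _ _ (resNet_nonneg hq hc0 hcq W b n x)

theorem stmt4 (F : NormFamily)
    (d : ℕ) (hd : 0 < d)
    (q : ℕ → ℕ) (hq : ∀ k, 0 < q k) (hqb : ∃ Q, ∀ k, q k ≤ Q)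
    (c : ℕ → ℕ → ℕ) (hcpos : ∀ k m, m ≤ q k → 0 < c k m)
    (hc0 : ∀ k, c k 0 = d) (hcq : ∀ k, c k (q k) = d)
    (W : ∀ k m, Matrix (Fin (c k (m+1))) (Fin (c k m)) ℝ)
    (b : ∀ k m, Fin (c k (m+1)) → ℝ)
    (hW : Summable fun k => ∏ m ∈ Finset.range (q k), F.op (W k m))
    (hb : Summable fun k => ∑ m ∈ Finset.range (q k),
      (∏ m' ∈ Finset.Ico (m+1) (q k), F.op (W k m')) * F.N (c k (m+1)) (b k m)) :
    ∀ x : Fin d → ℝ, (∀ i, x i ∈ Set.Icc (0:ℝ) 1) →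
      ∃ y, Tendsto (fun n => resNet d q hq c hc0 hcq W b n x) atTop (nhds y) :=
  stmt4_general F d q hq c hc0 hcq W b hW hb
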